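/- Let W be a nonempty set of channels. For every continuous nondecreasing function F : ℝ → ℝ, every rate R ∈ ℝ and every input pmf p_X, one has E_{r,F}(R, p_X, W) = inf_{R' ∈ ℝ} [ E_sp(R', p_X, W) + F(R' − R) ]; moreover R ↦ E_{r,F}(R, p_X, W) is nonincreasing, and F(t) ≤ G(t) for all t implies E_{r,F}(R, p_X, W) ≤ E_{r,G}(R, p_X, W). -/

import Mathlib

open scoped BigOperators

section Defs

variable {𝒳 𝒴 : Type*} [Fintype 𝒳] [Fintype 𝒴]

/-- `p` is a probability mass function on the finite alphabet `𝒳`. -/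
def IsPMF (p : 𝒳 → ℝ) : Prop := (∀ x, 0 ≤ p x) ∧ ∑ x, p x = 1

/-- A channel assigns to each input letter a pmf on `𝒴`. -/
def IsChannel (W : 𝒳 → 𝒴 → ℝ) : Prop := ∀ x, IsPMF (W x)

/-- Conditional Kullback–Leibler divergence `D(q ‖ W | pX)`, base-2 logarithms. -/
noncomputable def condKL (pX : 𝒳 → ℝ) (q W : 𝒳 → 𝒴 → ℝ) : ℝ :=
  ∑ x, ∑ y, pX x * q x y * Real.logb 2 (q x y / W x y)

/-- Mutual information `I(pX, q)` of the joint pmf `(x, y) ↦ pX x * q x y`. -/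
noncomputable def mutInfo (pX : 𝒳 → ℝ) (q : 𝒳 → 𝒴 → ℝ) : ℝ :=
  ∑ x, ∑ y, pX x * q x y * Real.logb 2 (q x y / ∑ x', pX x' * q x' y)

/-- Modified random-coding exponent `E_{r,F}(R, pX, W)`. -/
noncomputable def ErF (F : ℝ → ℝ) (R : ℝ) (pX : 𝒳 → ℝ) (W : 𝒳 → 𝒴 → ℝ) : ℝ :=
  sInf {v : ℝ | ∃ q : 𝒳 → 𝒴 → ℝ, IsChannel q ∧ v = condKL pX q W + F (mutInfo pX q - R)}

/-- Sphere-packing exponent `E_sp(R, pX, W)`, with value `+∞` if no conditional pmf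
satisfies the mutual-information constraint. -/
noncomputable def EspE (R : ℝ) (pX : 𝒳 → ℝ) (W : 𝒳 → 𝒴 → ℝ) : EReal :=
  sInf {v : EReal | ∃ q : 𝒳 → 𝒴 → ℝ,
    IsChannel q ∧ mutInfo pX q ≤ R ∧ v = (condKL pX q W : EReal)}

/-- `E_{r,F}` for a class of channels (infimum over the class). -/
noncomputable def ErFW (F : ℝ → ℝ) (R : ℝ) (pX : 𝒳 → ℝ) (𝒲 : Set (𝒳 → 𝒴 → ℝ)) : ℝ :=
  sInf {v : ℝ | ∃ p ∈ 𝒲, v = ErF F R pX p}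

/-- `E_sp` for a class of channels (infimum over the class). -/
noncomputable def EspEW (R : ℝ) (pX : 𝒳 → ℝ) (𝒲 : Set (𝒳 → 𝒴 → ℝ)) : EReal :=
  sInf {v : EReal | ∃ p ∈ 𝒲, v = EspE R pX p}

end Defs

/- The identity is a change in the order of two infima: splitting the infimum over `q` in
`E_{r,F}` according to the value `R' = I(pX, q)` gives `inf_{R'} [E_sp(R') + F(R' - R)]`,
because `F` is nondecreasing. The only analytic input is a uniform lower bound on all
exponents, without which the real infima `sInf` would take their junk value `0`: every summand
`q log (q / w)` with `w ≤ 1` is at least `q log q ≥ q - 1 ≥ -1`. -/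

lemma Real.neg_one_le_mul_log_div {q w : ℝ} (hq : 0 ≤ q) (hw₀ : 0 ≤ w) (hw₁ : w ≤ 1) :
    -1 ≤ q * Real.log (q / w) := by
  rcases hw₀.eq_or_lt with rfl | hw
  · simp
  rcases hq.eq_or_lt with rfl | hq'
  · simp
  have hlog : Real.log q ≤ Real.log (q / w) := by
    rw [Real.log_div hq'.ne' hw.ne']
    linarith [Real.log_nonpos hw₀ hw₁]
  calc -1 ≤ q - 1 := by linarith
    _ ≤ q * Real.log q := Real.self_sub_one_le_mul_log hq
    _ ≤ q * Real.log (q / w) := mul_le_mul_of_nonneg_left hlog hq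

lemma IsPMF.le_one {𝒴 : Type*} [Fintype 𝒴] {p : 𝒴 → ℝ} (hp : IsPMF p) (y : 𝒴) : p y ≤ 1 :=
  hp.2 ▸ Finset.single_le_sum (fun i _ => hp.1 i) (Finset.mem_univ y)

section Exponents

variable {𝒳 𝒴 : Type*} [Fintype 𝒳] [Fintype 𝒴] {pX : 𝒳 → ℝ}

lemma neg_card_div_log_two_le_condKL (hpX : IsPMF pX) {q W : 𝒳 → 𝒴 → ℝ}
    (hq : ∀ x y, 0 ≤ q x y) (hW₀ : ∀ x y, 0 ≤ W x y) (hW₁ : ∀ x y, W x y ≤ 1) :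
    -((Fintype.card 𝒴 : ℝ) / Real.log 2) ≤ condKL pX q W := by
  have hterm : ∀ x y, pX x * -(Real.log 2)⁻¹ ≤ pX x * q x y * Real.logb 2 (q x y / W x y) := by
    intro x y
    rw [mul_assoc, Real.logb, ← mul_div_assoc, div_eq_mul_inv, ← neg_one_mul]
    gcongr
    · exact hpX.1 x
    · exact Real.neg_one_le_mul_log_div (hq x y) (hW₀ x y) (hW₁ x y)
  calc -((Fintype.card 𝒴 : ℝ) / Real.log 2) = ∑ x, ∑ _y : 𝒴, pX x * -(Real.log 2)⁻¹ := by
        simp only [Finset.sum_const, Finset.card_univ, nsmul_eq_mul, ← Finset.mul_sum,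
          ← Finset.sum_mul, hpX.2]
        ring
    _ ≤ condKL pX q W := Finset.sum_le_sum fun x _ => Finset.sum_le_sum fun y _ => hterm x y

lemma neg_card_div_log_two_le_mutInfo (hpX : IsPMF pX) {q : 𝒳 → 𝒴 → ℝ} (hq : IsChannel q) :
    -((Fintype.card 𝒴 : ℝ) / Real.log 2) ≤ mutInfo pX q := by
  have hout : ∀ y, ∑ x, pX x * q x y ≤ 1 := fun y =>
    calc ∑ x, pX x * q x y ≤ ∑ x, pX x :=
          Finset.sum_le_sum fun x _ => mul_le_of_le_one_right (hpX.1 x) ((hq x).le_one y)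
      _ = 1 := hpX.2
  exact neg_card_div_log_two_le_condKL hpX (fun x y => (hq x).1 y)
    (fun _ y => Finset.sum_nonneg fun x _ => mul_nonneg (hpX.1 x) ((hq x).1 y)) (fun _ => hout)

variable {F G : ℝ → ℝ} {R : ℝ} {p : 𝒳 → 𝒴 → ℝ} {𝒲 : Set (𝒳 → 𝒴 → ℝ)}

lemma exists_le_condKL_add_mutInfo (hpX : IsPMF pX) (hF : Monotone F) (R : ℝ) :
    ∃ c, ∀ p q : 𝒳 → 𝒴 → ℝ, IsChannel p → IsChannel q →
      c ≤ condKL pX q p + F (mutInfo pX q - R) := by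
  set κ : ℝ := Fintype.card 𝒴 / Real.log 2
  refine ⟨-κ + F (-κ - R), fun p q hp hq => add_le_add ?_ (hF ?_)⟩
  · exact neg_card_div_log_two_le_condKL hpX (fun x y => (hq x).1 y) (fun x y => (hp x).1 y)
      (fun x y => (hp x).le_one y)
  · linarith [neg_card_div_log_two_le_mutInfo hpX hq]

lemma ErF_le (hpX : IsPMF pX) (hF : Monotone F) (hp : IsChannel p) {q : 𝒳 → 𝒴 → ℝ}
    (hq : IsChannel q) : ErF F R pX p ≤ condKL pX q p + F (mutInfo pX q - R) := by
  obtain ⟨c, hc⟩ := exists_le_condKL_add_mutInfo (𝒴 := 𝒴) hpX hF R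
  exact csInf_le ⟨c, by rintro _ ⟨q', hq', rfl⟩; exact hc p q' hp hq'⟩ ⟨q, hq, rfl⟩

lemma le_ErF {a : ℝ} (hp : IsChannel p)
    (h : ∀ q, IsChannel q → a ≤ condKL pX q p + F (mutInfo pX q - R)) : a ≤ ErF F R pX p :=
  le_csInf ⟨_, p, hp, rfl⟩ (by rintro _ ⟨q, hq, rfl⟩; exact h q hq)

lemma ErFW_le (hpX : IsPMF pX) (hF : Monotone F) (h𝒲 : ∀ p ∈ 𝒲, IsChannel p) (hp : p ∈ 𝒲) :
    ErFW F R pX 𝒲 ≤ ErF F R pX p := by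
  obtain ⟨c, hc⟩ := exists_le_condKL_add_mutInfo (𝒴 := 𝒴) hpX hF R
  refine csInf_le ⟨c, ?_⟩ ⟨p, hp, rfl⟩
  rintro _ ⟨p', hp', rfl⟩
  exact le_ErF (h𝒲 p' hp') fun q hq => hc p' q (h𝒲 p' hp') hq

lemma le_ErFW {a : ℝ} (h𝒲 : 𝒲.Nonempty) (h : ∀ p ∈ 𝒲, a ≤ ErF F R pX p) :
    a ≤ ErFW F R pX 𝒲 := by
  obtain ⟨p, hp⟩ := h𝒲
  exact le_csInf ⟨_, p, hp, rfl⟩ (by rintro _ ⟨p', hp', rfl⟩; exact h p' hp')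

lemma ErFW_le_ErFW {R₁ R₂ : ℝ} (hpX : IsPMF pX) (hF : Monotone F) (h𝒲ne : 𝒲.Nonempty)
    (h𝒲 : ∀ p ∈ 𝒲, IsChannel p) (hFG : ∀ t, F (t - R₁) ≤ G (t - R₂)) :
    ErFW F R₁ pX 𝒲 ≤ ErFW G R₂ pX 𝒲 :=
  le_ErFW h𝒲ne fun p hp => le_ErF (h𝒲 p hp) fun q hq =>
    calc ErFW F R₁ pX 𝒲 ≤ ErF F R₁ pX p := ErFW_le hpX hF h𝒲 hp
      _ ≤ condKL pX q p + F (mutInfo pX q - R₁) := ErF_le hpX hF (h𝒲 p hp) hq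
      _ ≤ condKL pX q p + G (mutInfo pX q - R₂) := add_le_add_right (hFG _) _

end Exponents

lemma EReal.le_sInf_add_coe {S : Set EReal} {a : EReal} {r : ℝ}
    (h : ∀ v ∈ S, a ≤ v + r) : a ≤ sInf S + r := by
  have hr : ∀ b c : EReal, b - r ≤ c ↔ b ≤ c + r := fun _ _ =>
    EReal.sub_le_iff_le_add (.inl (EReal.coe_ne_bot r)) (.inl (EReal.coe_ne_top r))
  exact (hr _ _).1 (le_sInf fun v hv => (hr _ _).2 (h v hv))

lemma EReal.le_coe_csInf {S : Set ℝ} (hS : S.Nonempty) {a : EReal}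
    (h : ∀ x ∈ S, a ≤ x) : a ≤ ((sInf S : ℝ) : EReal) := by
  induction a using EReal.rec with
  | bot => exact bot_le
  | coe b => exact EReal.coe_le_coe_iff.2 (le_csInf hS fun x hx => EReal.coe_le_coe_iff.1 (h x hx))
  | top =>
      obtain ⟨x, hx⟩ := hS
      exact absurd (top_le_iff.1 (h x hx)) (EReal.coe_ne_top x)

section SpherePacking

variable {𝒳 𝒴 : Type*} [Fintype 𝒳] [Fintype 𝒴] {pX : 𝒳 → ℝ} {F : ℝ → ℝ} {R : ℝ}
  {𝒲 : Set (𝒳 → 𝒴 → ℝ)}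

lemma EspEW_le_EspE {p : 𝒳 → 𝒴 → ℝ} (hp : p ∈ 𝒲) (R' : ℝ) : EspEW R' pX 𝒲 ≤ EspE R' pX p :=
  sInf_le ⟨p, hp, rfl⟩

lemma EspE_le_condKL {p q : 𝒳 → 𝒴 → ℝ} (hq : IsChannel q) {R' : ℝ} (hR' : mutInfo pX q ≤ R') :
    EspE R' pX p ≤ condKL pX q p :=
  sInf_le ⟨q, hq, hR', rfl⟩

lemma coe_ErFW_le_EspEW_add (hpX : IsPMF pX) (hF : Monotone F) (h𝒲 : ∀ p ∈ 𝒲, IsChannel p)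
    (R' : ℝ) : (ErFW F R pX 𝒲 : EReal) ≤ EspEW R' pX 𝒲 + (F (R' - R) : EReal) := by
  refine EReal.le_sInf_add_coe ?_
  rintro _ ⟨p, hp, rfl⟩
  refine EReal.le_sInf_add_coe ?_
  rintro _ ⟨q, hq, hIq, rfl⟩
  rw [← EReal.coe_add, EReal.coe_le_coe_iff]
  calc ErFW F R pX 𝒲 ≤ ErF F R pX p := ErFW_le hpX hF h𝒲 hp
    _ ≤ condKL pX q p + F (mutInfo pX q - R) := ErF_le hpX hF (h𝒲 p hp) hq
    _ ≤ condKL pX q p + F (R' - R) := add_le_add_right (hF (by linarith)) _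

lemma iInf_EspEW_add_le_coe_ErFW (h𝒲ne : 𝒲.Nonempty) (h𝒲 : ∀ p ∈ 𝒲, IsChannel p) :
    ⨅ R' : ℝ, (EspEW R' pX 𝒲 + (F (R' - R) : EReal)) ≤ (ErFW F R pX 𝒲 : EReal) := by
  obtain ⟨p₀, hp₀⟩ := h𝒲ne
  refine EReal.le_coe_csInf (S := {v | ∃ p ∈ 𝒲, v = ErF F R pX p}) ⟨_, p₀, hp₀, rfl⟩ ?_
  rintro _ ⟨p, hp, rfl⟩
  refine EReal.le_coe_csInf (S := {v | ∃ q, IsChannel q ∧ v = condKL pX q p + F (mutInfo pX q - R)})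
    ⟨_, p, h𝒲 p hp, rfl⟩ ?_
  rintro _ ⟨q, hq, rfl⟩
  calc ⨅ R' : ℝ, (EspEW R' pX 𝒲 + (F (R' - R) : EReal))
      ≤ EspEW (mutInfo pX q) pX 𝒲 + (F (mutInfo pX q - R) : EReal) := iInf_le _ _
    _ ≤ EspE (mutInfo pX q) pX p + (F (mutInfo pX q - R) : EReal) :=
        add_le_add_left (EspEW_le_EspE hp _) _
    _ ≤ condKL pX q p + (F (mutInfo pX q - R) : EReal) :=
        add_le_add_left (EspE_le_condKL hq le_rfl) _
    _ = ((condKL pX q p + F (mutInfo pX q - R) : ℝ) : EReal) := (EReal.coe_add _ _).symm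

end SpherePacking

theorem ErFW_props_general {𝒳 𝒴 : Type*} [Fintype 𝒳] [Fintype 𝒴]
    (pX : 𝒳 → ℝ) (hpX : IsPMF pX)
    (𝒲 : Set (𝒳 → 𝒴 → ℝ)) (h𝒲ne : 𝒲.Nonempty) (h𝒲ch : ∀ p ∈ 𝒲, IsChannel p)
    (F : ℝ → ℝ) (hFmono : Monotone F) (R : ℝ) :
    ((ErFW F R pX 𝒲 : EReal) = ⨅ R' : ℝ, (EspEW R' pX 𝒲 + (F (R' - R) : EReal)))
      ∧ Antitone (fun R' : ℝ => ErFW F R' pX 𝒲)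
      ∧ (∀ G : ℝ → ℝ, (∀ t : ℝ, F t ≤ G t) → ErFW F R pX 𝒲 ≤ ErFW G R pX 𝒲) :=
  ⟨le_antisymm (le_iInf (coe_ErFW_le_EspEW_add hpX hFmono h𝒲ch))
      (iInf_EspEW_add_le_coe_ErFW h𝒲ne h𝒲ch),
    fun _ _ hR => ErFW_le_ErFW hpX hFmono h𝒲ne h𝒲ch fun _ => hFmono (by linarith),
    fun _ hFG => ErFW_le_ErFW hpX hFmono h𝒲ne h𝒲ch fun _ => hFG _⟩

/-- For a nonempty set `𝒲` of channels and every continuous nondecreasing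
`F`, `E_{r,F}(R,pX,𝒲) = inf_{R'} [E_sp(R',pX,𝒲) + F(R'-R)]`; moreover
`R ↦ E_{r,F}(R,pX,𝒲)` is nonincreasing, and `F ≤ G` pointwise implies
`E_{r,F}(R,pX,𝒲) ≤ E_{r,G}(R,pX,𝒲)`. -/
theorem ErFW_props {𝒳 𝒴 : Type*} [Fintype 𝒳] [Fintype 𝒴]
    (pX : 𝒳 → ℝ) (hpX : IsPMF pX)
    (𝒲 : Set (𝒳 → 𝒴 → ℝ)) (h𝒲ne : 𝒲.Nonempty) (h𝒲ch : ∀ p ∈ 𝒲, IsChannel p)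
    (F : ℝ → ℝ) (hFcont : Continuous F) (hFmono : Monotone F) (R : ℝ) :
    ((ErFW F R pX 𝒲 : EReal) = ⨅ R' : ℝ, (EspEW R' pX 𝒲 + (F (R' - R) : EReal)))
      ∧ Antitone (fun R' : ℝ => ErFW F R' pX 𝒲)
      ∧ (∀ G : ℝ → ℝ, (∀ t : ℝ, F t ≤ G t) → ErFW F R pX 𝒲 ≤ ErFW G R pX 𝒲) :=
  ErFW_props_general pX hpX 𝒲 h𝒲ne h𝒲ch F hFmono R
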